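/- In a temporal graph G, the concatenation of a useful dominating path P from s to v with a single edge e from v to w is a useful dominating path, provided the resulting sequence is time-respecting and there is no edge e' from v to w with dep(e') ≥ arr(P) and arr(e') < arr(e). -/

import Mathlib

/-- A temporal edge with tail, head, departure time and arrival time. -/
structure TEdge (V : Type) where
  tail : V
  head : V
  dep : ℕ
  arr : ℕ

/-- A temporal graph: a set of temporal edges, each with arrival strictly after departure. -/
structure TGraph (V : Type) where
  edges : Set (TEdge V)
  valid : ∀ e ∈ edges, e.dep < e.arr

variable {V : Type}

/-- Time-respecting path: nonempty sequence of edges of `G`, consecutive edges share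
endpoints and each edge departs no earlier than the previous edge arrives. -/
def TRP (G : TGraph V) (p : List (TEdge V)) : Prop :=
  p ≠ [] ∧ (∀ e ∈ p, e ∈ G.edges) ∧
    List.Chain' (fun e f => e.head = f.tail ∧ e.arr ≤ f.dep) p

/-- Departure time of a path (departure of its first edge). -/
def pdep (p : List (TEdge V)) : ℕ := (p.head?.elim 0 TEdge.dep)

/-- Arrival time of a path (arrival of its last edge). -/
def parr (p : List (TEdge V)) : ℕ := (p.getLast?.elim 0 TEdge.arr)

/-- Start vertex of a path. -/
def startV (p : List (TEdge V)) : Option V := p.head?.map TEdge.tail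

/-- End vertex of a path. -/
def endV (p : List (TEdge V)) : Option V := p.getLast?.map TEdge.head

/-- The route (sequence of vertices) a path goes through. -/
def routeOf (p : List (TEdge V)) : List V :=
  p.map TEdge.tail ++ (p.getLast?.elim [] fun e => [e.head])

/-- `ℙ(s,z,r,t)`: time-respecting paths from `s` to `z` through route `r` departing at `t`. -/
def PathsIn (G : TGraph V) (s z : V) (r : List V) (t : ℕ) : Set (List (TEdge V)) :=
  {p | TRP G p ∧ startV p = some s ∧ endV p = some z ∧ routeOf p = r ∧ pdep p = t}

/-- Dominating path in `ℙ(s,z,r,t)`. -/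
def DominatingIn (G : TGraph V) (s z : V) (r : List V) (t : ℕ) (p : List (TEdge V)) : Prop :=
  p ∈ PathsIn G s z r t ∧ ∀ q ∈ PathsIn G s z r t, parr p ≤ parr q

/-- A path is dominating with respect to its own start vertex, route and departure time. -/
def DomSelf (G : TGraph V) (p : List (TEdge V)) : Prop :=
  TRP G p ∧ ∀ q, TRP G q → startV q = startV p → routeOf q = routeOf p →
    pdep q = pdep p → parr p ≤ parr q

/-- Useful dominating path: every (nonempty) prefix is dominating on its own route
and departure time. -/
def UsefulDom (G : TGraph V) (p : List (TEdge V)) : Prop :=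
  ∀ j, 1 ≤ j → j ≤ p.length → DomSelf G (p.take j)

/-- The edge relation of the edge-scan-dependency graph: `v_e → v_f` iff `f` departs
from the head of `e` no earlier than `e` arrives and no parallel edge with the same
endpoints departs no earlier than `arr e` and arrives strictly before `f`. -/
def ESDGAdj (G : TGraph V) (e f : TEdge V) : Prop :=
  e ∈ G.edges ∧ f ∈ G.edges ∧ e.head = f.tail ∧ e.arr ≤ f.dep ∧
    ¬ ∃ g ∈ G.edges, g.tail = f.tail ∧ g.head = f.head ∧ e.arr ≤ g.dep ∧ g.arr < f.arr

/-- A directed path in the ESDG, given as the corresponding sequence of temporal edges. -/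
def ESDGPath (G : TGraph V) (p : List (TEdge V)) : Prop :=
  p ≠ [] ∧ (∀ e ∈ p, e ∈ G.edges) ∧ List.Chain' (ESDGAdj G) p

/-- Earliest arrival path from `s` to `z` with ready time `rt`. -/
def EAPath (G : TGraph V) (s z : V) (rt : ℕ) (p : List (TEdge V)) : Prop :=
  TRP G p ∧ startV p = some s ∧ endV p = some z ∧ rt ≤ pdep p ∧
    ∀ q, TRP G q → startV q = some s → endV q = some z → rt ≤ pdep q → parr p ≤ parr q

/-- Fastest path from `s` to `z`: minimizes journey time `arr - dep`. -/
def FastestPath (G : TGraph V) (s z : V) (p : List (TEdge V)) : Prop :=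
  TRP G p ∧ startV p = some s ∧ endV p = some z ∧
    ∀ q, TRP G q → startV q = some s → endV q = some z →
      parr p - pdep p ≤ parr q - pdep q


/-!
Only the full path `p ++ [e]` needs an argument: its proper prefixes are prefixes of `p`.
A competitor `q` on the same route splits as `q' ++ [f]` with `q'` on the route of `p`
and `f` parallel to `e`. Since `p` dominates `q'`, the edge `f` departs no earlier than
`arr p`, so by the minimality of `e` among such parallel edges, `arr e ≤ arr f`.
-/

variable {G : TGraph V} {p q : List (TEdge V)} {e : TEdge V} {x : V}

lemma ne_nil_of_endV_eq_some (h : endV p = some x) : p ≠ [] := by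
  rintro rfl
  simp [endV] at h

lemma parr_append_singleton (p : List (TEdge V)) (e : TEdge V) : parr (p ++ [e]) = e.arr := by
  simp [parr]

lemma pdep_append (hp : p ≠ []) : pdep (p ++ q) = pdep p := by
  simp [pdep, List.head?_append_of_ne_nil _ hp]

lemma startV_append (hp : p ≠ []) : startV (p ++ q) = startV p := by
  simp [startV, List.head?_append_of_ne_nil _ hp]

lemma routeOf_eq_of_endV_eq_some (h : endV p = some x) :
    routeOf p = p.map TEdge.tail ++ [x] := by
  rcases hl : p.getLast? with _ | l
  · simp [endV, hl] at h
  · simp_all [endV, routeOf]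

lemma getLast?_routeOf_of_endV_eq_some (h : endV p = some x) : (routeOf p).getLast? = some x := by
  simp [routeOf_eq_of_endV_eq_some h]

lemma length_routeOf (hp : p ≠ []) : (routeOf p).length = p.length + 1 := by
  simp [routeOf, List.getLast?_eq_some_getLast hp]

lemma routeOf_append_singleton (h : endV p = some e.tail) :
    routeOf (p ++ [e]) = routeOf p ++ [e.head] := by
  rw [routeOf_eq_of_endV_eq_some h, routeOf_eq_of_endV_eq_some (x := e.head) (by simp [endV])]
  simp

lemma trp_iff_isChain : TRP G p ↔ p ≠ [] ∧ (∀ e ∈ p, e ∈ G.edges) ∧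
    List.IsChain (fun e f => e.head = f.tail ∧ e.arr ≤ f.dep) p :=
  Iff.rfl

lemma trp_append_singleton_iff (hp : p ≠ []) :
    TRP G (p ++ [e]) ↔
      TRP G p ∧ e ∈ G.edges ∧ endV p = some e.tail ∧ parr p ≤ e.dep := by
  simp only [trp_iff_isChain, List.isChain_append, List.isChain_singleton, List.mem_append,
    List.mem_singleton, or_imp, forall_and, forall_eq, forall_eq', endV, parr,
    List.getLast?_eq_some_getLast hp, List.head?_cons, Option.mem_def, Option.some.injEq,
    Option.map_some, Option.elim_some, ne_eq, List.append_eq_nil_iff, reduceCtorEq, and_false,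
    not_false_eq_true, hp, true_and]
  tauto

lemma UsefulDom.domSelf (h : UsefulDom G p) (hp : p ≠ []) : DomSelf G p := by
  simpa using h p.length (List.length_pos_iff.2 hp) le_rfl

lemma DomSelf.append_singleton (hp : DomSelf G p) (he : e ∈ G.edges)
    (hend : endV p = some e.tail) (htr : parr p ≤ e.dep)
    (hmin : ¬ ∃ e' ∈ G.edges, e'.tail = e.tail ∧ e'.head = e.head ∧
      parr p ≤ e'.dep ∧ e'.arr < e.arr) :
    DomSelf G (p ++ [e]) := by
  have hne := ne_nil_of_endV_eq_some hend
  refine ⟨(trp_append_singleton_iff hne).2 ⟨hp.1, he, hend, htr⟩, ?_⟩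
  intro q hq hstart hroute hdep
  obtain rfl | ⟨q, f, rfl⟩ := q.eq_nil_or_concat'
  · exact absurd rfl hq.1
  have hlen : q.length = p.length := by
    simpa [length_routeOf] using congrArg List.length hroute
  have hqne : q ≠ [] := List.ne_nil_of_length_pos (hlen ▸ List.length_pos_iff.2 hne)
  obtain ⟨hq, hf, hqend, hqf⟩ := (trp_append_singleton_iff hqne).1 hq
  rw [routeOf_append_singleton hqend, routeOf_append_singleton hend] at hroute
  obtain ⟨hroute, hhead⟩ := List.append_inj' hroute rfl
  have htail : f.tail = e.tail := Option.some.inj <| by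
    rw [← getLast?_routeOf_of_endV_eq_some hqend, hroute, getLast?_routeOf_of_endV_eq_some hend]
  have hfdep : parr p ≤ f.dep :=
    (hp.2 q hq (by rwa [startV_append hqne, startV_append hne] at hstart) hroute
      (by rwa [pdep_append hqne, pdep_append hne] at hdep)).trans hqf
  rw [parr_append_singleton, parr_append_singleton]
  exact not_lt.1 fun hlt => hmin ⟨f, hf, htail, by simpa using hhead, hfdep, hlt⟩

theorem stmt15_general (G : TGraph V) (p : List (TEdge V))
    (hU : UsefulDom G p) (e : TEdge V) (he : e ∈ G.edges)
    (hend : endV p = some e.tail) (htr : parr p ≤ e.dep)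
    (hmin : ¬ ∃ e' ∈ G.edges, e'.tail = e.tail ∧ e'.head = e.head ∧
      parr p ≤ e'.dep ∧ e'.arr < e.arr) :
    UsefulDom G (p ++ [e]) := by
  intro j hj1 hj2
  obtain hj | rfl := Nat.le_succ_iff.1 (by simpa using hj2)
  · rw [List.take_append_of_le_length hj]
    exact hU j hj1 hj
  · rw [List.take_of_length_le (by simp)]
    exact (hU.domSelf (ne_nil_of_endV_eq_some hend)).append_singleton he hend htr hmin

theorem stmt15 (G : TGraph V) (p : List (TEdge V)) (hne : p ≠ [])
    (hU : UsefulDom G p) (e : TEdge V) (he : e ∈ G.edges)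
    (hend : endV p = some e.tail) (htr : parr p ≤ e.dep)
    (hmin : ¬ ∃ e' ∈ G.edges, e'.tail = e.tail ∧ e'.head = e.head ∧
      parr p ≤ e'.dep ∧ e'.arr < e.arr) :
    UsefulDom G (p ++ [e]) :=
  stmt15_general G p hU e he hend htr hmin
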